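/- arXiv:1111.2679 — 7 statements merged into one kernel-verified Lean document; each statement's English description precedes it below -/
import Mathlib

section
/- Let M>0, H∈ℝ, and c₁ = -8M³H. Then for r>2M, l₁(r) = (1/√(1-2M/r))·(Hr - 8M³H/r²) satisfies l₁(r) = H·√((r-2M)/r)·(r²+2Mr+4M²)/r, and consequently f₁'(r) = H·√(r/(r-2M)) · √( r(r²+2Mr+4M²)² / ( r³ + H²(r-2M)(r²+2Mr+4M²)² ) ), which for H≠0 is of order O((r-2M)^{-1/2}) as r→2M⁺; hence ∫_{2M}^{r₀} f₁'(r) dr converges for any r₀>2M. -/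
/-!
Since `r³ - 8M³ = (r - 2M)(r² + 2Mr + 4M²)`, the borderline choice `c₁ = -8M³H` makes
`l₁ = H √((r - 2M)/r) (r² + 2Mr + 4M²)/r` vanish like `√(r - 2M)` at the horizon.
Dividing by `h = (r - 2M)/r` leaves a singularity of order `(r - 2M)^{-1/2}` only, the factor
`√(1/(1 + l₁²))` being at most `1`, and this power is integrable at `2M`.
-/

open Real Set MeasureTheory

noncomputable section

namespace Schwarzschild

/-- The function `l₁` of the borderline case `c₁ = -8M³H`. -/
def borderlineL (M H r : ℝ) : ℝ :=
  (1 / √(1 - 2 * M / r)) * (H * r - 8 * M ^ 3 * H / r ^ 2)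

/-- The slope `f'` of an SS-CMC graph in terms of `l`; the denominator is `h = 1 - 2M/r`. -/
def cmcSlope (M l r : ℝ) : ℝ :=
  l / (1 - 2 * M / r) * √(1 / (1 + l ^ 2))

lemma abs_cmcSlope_le (M l r : ℝ) : |cmcSlope M l r| ≤ |l / (1 - 2 * M / r)| := by
  have h_le_one : √(1 / (1 + l ^ 2)) ≤ 1 :=
    sqrt_le_one.mpr (div_le_one_of_le₀ (by nlinarith [sq_nonneg l]) (by positivity))
  rw [cmcSlope, abs_mul, abs_of_nonneg (sqrt_nonneg _)]
  exact mul_le_of_le_one_right (abs_nonneg _) h_le_one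

lemma integrableOn_sub_rpow_Ioc {a b s : ℝ} (hab : a ≤ b) (hs : -1 < s) :
    IntegrableOn (fun x : ℝ => (x - a) ^ s) (Ioc a b) := by
  have h := (intervalIntegral.intervalIntegrable_rpow' (a := 0) (b := b - a) hs).comp_sub_right a
  rw [zero_add, sub_add_cancel] at h
  exact (intervalIntegrable_iff_integrableOn_Ioc_of_le hab).mp h

variable {M r : ℝ}

lemma one_sub_two_mul_div_eq (hr : r ≠ 0) : 1 - 2 * M / r = (r - 2 * M) / r := by
  field_simp

variable (H : ℝ) (hM : 0 < M) (hr : 2 * M < r)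
include hM hr

lemma borderlineL_eq :
    borderlineL M H r = H * √((r - 2 * M) / r) * ((r ^ 2 + 2 * M * r + 4 * M ^ 2) / r) := by
  have hr0 : 0 < r := by linarith
  have hrM : 0 < r - 2 * M := by linarith
  have h_factor : H * r - 8 * M ^ 3 * H / r ^ 2
      = H * (r - 2 * M) * ((r ^ 2 + 2 * M * r + 4 * M ^ 2) / r ^ 2) := by
    field_simp
    ring
  rw [borderlineL, one_sub_two_mul_div_eq hr0.ne', sqrt_div hrM.le, h_factor]
  have hs := sq_sqrt hrM.le
  have ht := sq_sqrt hr0.le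
  have : 0 < √(r - 2 * M) := sqrt_pos.mpr hrM
  have : 0 < √r := sqrt_pos.mpr hr0
  field_simp
  rw [hs, ht]
  ring

lemma cmcSlope_borderlineL_eq :
    cmcSlope M (borderlineL M H r) r
      = H * √(r / (r - 2 * M)) *
          √(r * (r ^ 2 + 2 * M * r + 4 * M ^ 2) ^ 2 /
            (r ^ 3 + H ^ 2 * (r - 2 * M) * (r ^ 2 + 2 * M * r + 4 * M ^ 2) ^ 2)) := by
  have hr0 : 0 < r := by linarith
  have hrM : 0 < r - 2 * M := by linarith
  have hQ : 0 < r ^ 2 + 2 * M * r + 4 * M ^ 2 := by positivity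
  have hD : 0 < r ^ 3 + H ^ 2 * (r - 2 * M) * (r ^ 2 + 2 * M * r + 4 * M ^ 2) ^ 2 := by
    positivity
  have h_one_add_sq : 1 + borderlineL M H r ^ 2
      = (r ^ 3 + H ^ 2 * (r - 2 * M) * (r ^ 2 + 2 * M * r + 4 * M ^ 2) ^ 2) / r ^ 3 := by
    rw [borderlineL_eq H hM hr, mul_pow, mul_pow, sq_sqrt (by positivity)]
    field_simp
  have h_sqrt_cube : √(r ^ 3) = r * √r := by
    rw [show r ^ 3 = r ^ 2 * r by ring, sqrt_mul (sq_nonneg r), sqrt_sq hr0.le]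
  have h_sqrt_num : √(r * (r ^ 2 + 2 * M * r + 4 * M ^ 2) ^ 2)
      = √r * (r ^ 2 + 2 * M * r + 4 * M ^ 2) := by
    rw [sqrt_mul hr0.le, sqrt_sq hQ.le]
  rw [cmcSlope, h_one_add_sq, borderlineL_eq H hM hr, one_sub_two_mul_div_eq hr0.ne', one_div,
    inv_div, sqrt_div (pow_nonneg hr0.le 3), sqrt_div hrM.le r, sqrt_div hr0.le (r - 2 * M),
    sqrt_div (mul_nonneg hr0.le (sq_nonneg _)), h_sqrt_cube, h_sqrt_num]
  have hs := sq_sqrt hrM.le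
  have ht := sq_sqrt hr0.le
  have : 0 < √(r - 2 * M) := sqrt_pos.mpr hrM
  have : 0 < √r := sqrt_pos.mpr hr0
  have : 0 < √(r ^ 3 + H ^ 2 * (r - 2 * M) * (r ^ 2 + 2 * M * r + 4 * M ^ 2) ^ 2) :=
    sqrt_pos.mpr hD
  field_simp
  rw [hs, ht]
  ring

lemma borderlineL_div_eq :
    borderlineL M H r / (1 - 2 * M / r)
      = H * ((r ^ 2 + 2 * M * r + 4 * M ^ 2) / √r) * (r - 2 * M) ^ (-(1 : ℝ) / 2) := by
  have hr0 : 0 < r := by linarith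
  have hrM : 0 < r - 2 * M := by linarith
  have h_rpow : (r - 2 * M) ^ (-(1 : ℝ) / 2) = (√(r - 2 * M))⁻¹ := by
    rw [neg_div, rpow_neg hrM.le, sqrt_eq_rpow]
  rw [borderlineL_eq H hM hr, one_sub_two_mul_div_eq hr0.ne', sqrt_div hrM.le, h_rpow]
  have hs := sq_sqrt hrM.le
  have : 0 < √(r - 2 * M) := sqrt_pos.mpr hrM
  have : 0 < √r := sqrt_pos.mpr hr0
  field_simp
  rw [hs]

lemma abs_cmcSlope_borderlineL_le {R : ℝ} (hR : r ≤ R) :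
    |cmcSlope M (borderlineL M H r) r|
      ≤ |H| * ((R ^ 2 + 2 * M * R + 4 * M ^ 2) / √(2 * M)) *
          (r - 2 * M) ^ (-(1 : ℝ) / 2) := by
  have hr0 : 0 < r := by linarith
  have hR0 : 0 < R := by linarith
  have hQ : 0 < r ^ 2 + 2 * M * r + 4 * M ^ 2 := by positivity
  have h_coeff :
      (r ^ 2 + 2 * M * r + 4 * M ^ 2) / √r ≤ (R ^ 2 + 2 * M * R + 4 * M ^ 2) / √(2 * M) :=
    div_le_div₀ (by positivity) (by nlinarith) (sqrt_pos.mpr (by positivity))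
      (sqrt_le_sqrt hr.le)
  calc |cmcSlope M (borderlineL M H r) r|
      ≤ |borderlineL M H r / (1 - 2 * M / r)| := abs_cmcSlope_le M _ r
    _ = |H| * ((r ^ 2 + 2 * M * r + 4 * M ^ 2) / √r) * (r - 2 * M) ^ (-(1 : ℝ) / 2) := by
      rw [borderlineL_div_eq H hM hr, abs_mul, abs_mul,
        abs_of_pos (div_pos hQ (sqrt_pos.mpr hr0)), abs_of_nonneg (rpow_nonneg (by linarith) _)]
    _ ≤ _ := by gcongr

end Schwarzschild

open Schwarzschild

/-- The borderline case `c₁ = -8M³H`: explicit formulas for `l₁` and `f₁'`, the order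
`O((r-2M)^{-1/2})` when `H ≠ 0`, and integrability of `f₁'` near `r = 2M`. -/
theorem stmt_7 (M H : ℝ) (hM : 0 < M) :
    (∀ r : ℝ, 2 * M < r →
      (1 / Real.sqrt (1 - 2 * M / r)) * (H * r - 8 * M ^ 3 * H / r ^ 2)
        = H * Real.sqrt ((r - 2 * M) / r) * ((r ^ 2 + 2 * M * r + 4 * M ^ 2) / r)) ∧
    (∀ r : ℝ, 2 * M < r →
      ((1 / Real.sqrt (1 - 2 * M / r)) * (H * r - 8 * M ^ 3 * H / r ^ 2)) / (1 - 2 * M / r) *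
        Real.sqrt (1 / (1 + ((1 / Real.sqrt (1 - 2 * M / r)) *
          (H * r - 8 * M ^ 3 * H / r ^ 2)) ^ 2))
        = H * Real.sqrt (r / (r - 2 * M)) *
          Real.sqrt (r * (r ^ 2 + 2 * M * r + 4 * M ^ 2) ^ 2 /
            (r ^ 3 + H ^ 2 * (r - 2 * M) * (r ^ 2 + 2 * M * r + 4 * M ^ 2) ^ 2))) ∧
    (H ≠ 0 → ∃ C > (0 : ℝ), ∃ δ > (0 : ℝ), ∀ r ∈ Set.Ioo (2 * M) (2 * M + δ),
      |((1 / Real.sqrt (1 - 2 * M / r)) * (H * r - 8 * M ^ 3 * H / r ^ 2)) / (1 - 2 * M / r) *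
        Real.sqrt (1 / (1 + ((1 / Real.sqrt (1 - 2 * M / r)) *
          (H * r - 8 * M ^ 3 * H / r ^ 2)) ^ 2))|
        ≤ C * (r - 2 * M) ^ (-(1 : ℝ) / 2)) ∧
    (∀ r₀ : ℝ, 2 * M < r₀ →
      MeasureTheory.IntegrableOn
        (fun r : ℝ =>
          ((1 / Real.sqrt (1 - 2 * M / r)) * (H * r - 8 * M ^ 3 * H / r ^ 2)) / (1 - 2 * M / r) *
            Real.sqrt (1 / (1 + ((1 / Real.sqrt (1 - 2 * M / r)) *
              (H * r - 8 * M ^ 3 * H / r ^ 2)) ^ 2)))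
        (Set.Ioc (2 * M) r₀)) := by
  change (∀ r, 2 * M < r → borderlineL M H r = _) ∧
    (∀ r, 2 * M < r → cmcSlope M (borderlineL M H r) r = _) ∧
    (H ≠ 0 → ∃ C > (0 : ℝ), ∃ δ > (0 : ℝ), ∀ r ∈ Ioo (2 * M) (2 * M + δ),
      |cmcSlope M (borderlineL M H r) r| ≤ C * (r - 2 * M) ^ (-(1 : ℝ) / 2)) ∧
    (∀ r₀, 2 * M < r₀ →
      IntegrableOn (fun r => cmcSlope M (borderlineL M H r) r) (Ioc (2 * M) r₀))
  refine ⟨fun r hr => borderlineL_eq H hM hr, fun r hr => cmcSlope_borderlineL_eq H hM hr,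
    fun hH => ?_, fun r₀ hr₀ => ?_⟩
  · set R := 2 * M + 1
    refine ⟨|H| * ((R ^ 2 + 2 * M * R + 4 * M ^ 2) / √(2 * M)), by positivity, 1, one_pos,
      fun r hr => abs_cmcSlope_borderlineL_le H hM hr.1 hr.2.le⟩
  · have h_rpow := integrableOn_sub_rpow_Ioc hr₀.le (s := -(1 : ℝ) / 2) (by norm_num)
    refine (h_rpow.const_mul (|H| * ((r₀ ^ 2 + 2 * M * r₀ + 4 * M ^ 2) / √(2 * M)))).mono'
      ?_ ?_
    · exact Measurable.aestronglyMeasurable (by unfold cmcSlope borderlineL; fun_prop)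
    · filter_upwards [ae_restrict_mem measurableSet_Ioc] with r hr
      exact abs_cmcSlope_borderlineL_le H hM hr.1 hr.2
end
end

section
/- Let M>0, H∈ℝ, c₁ > -8M³H. Define f₁'(r)=(l₁(r)/h(r))·√(1/(1+l₁(r)²)) with h(r)=1-2M/r, l₁(r)=(1/√h(r))(Hr+c₁/r²). Then there exists δ>0 such that on (2M, 2M+δ): 1/h(r) - 1/(2(Hr+c₁/r²)²) ≤ f₁'(r) ≤ 1/h(r). -/
/-!
Writing `h = 1 - 2M/r` and `P = Hr + c₁/r²`, one has `f₁' = h⁻¹ (1 + h/P²)^(-1/2)` as soon as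
`P > 0`, so both bounds follow from `1 - x/2 ≤ (1 + x)^(-1/2) ≤ 1` for `x = h/P² ≥ 0`. The only
role of `δ` is to keep `P` positive: at the horizon `P(2M) = 2MH + c₁/(4M²) > 0` exactly when
`c₁ > -8M³H`.
-/

open Real Set Filter Topology

/-- The slope `f₁' = (l/h) √(1/(1 + l²))` with `l = P/√h`. -/
noncomputable def cmcSlope (h P : ℝ) : ℝ :=
  1 / √h * P / h * √(1 / (1 + (1 / √h * P) ^ 2))

theorem one_sub_div_two_le_one_div_sqrt_one_add {x : ℝ} (hx : -1 < x) :
    1 - x / 2 ≤ 1 / √(1 + x) := by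
  have hu : 0 < √(1 + x) := sqrt_pos.2 (by linarith)
  have hu2 : √(1 + x) ^ 2 = 1 + x := sq_sqrt (by linarith)
  rw [le_div_iff₀ hu]
  -- with `u = √(1 + x)` this is `(u - 1)² (u + 2) ≥ 0`
  nlinarith [mul_nonneg (sq_nonneg (√(1 + x) - 1)) (by linarith : 0 ≤ √(1 + x) + 2)]

theorem one_div_sqrt_one_add_le_one {x : ℝ} (hx : 0 ≤ x) : 1 / √(1 + x) ≤ 1 :=
  div_le_one_of_le₀ (one_le_sqrt.2 (by linarith)) (sqrt_nonneg _)

theorem cmcSlope_eq {h P : ℝ} (hh : 0 < h) (hP : 0 < P) :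
    cmcSlope h P = 1 / h * (1 / √(1 + h / P ^ 2)) := by
  have hs : √h ^ 2 = h := sq_sqrt hh.le
  have hl : 1 / (1 + (1 / √h * P) ^ 2) = (1 + h / P ^ 2)⁻¹ * h / P ^ 2 := by
    field_simp
    rw [hs]; ring
  rw [cmcSlope, hl, sqrt_div' _ (sq_nonneg P), sqrt_mul' _ hh.le, sqrt_sq hP.le, sqrt_inv]
  field_simp

theorem cmcSlope_mem_Icc {h P : ℝ} (hh : 0 < h) (hP : 0 < P) :
    1 / h - 1 / (2 * P ^ 2) ≤ cmcSlope h P ∧ cmcSlope h P ≤ 1 / h := by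
  have hx : 0 ≤ h / P ^ 2 := by positivity
  have hinv : 0 < 1 / h := by positivity
  rw [cmcSlope_eq hh hP]
  constructor
  · calc 1 / h - 1 / (2 * P ^ 2) = 1 / h * (1 - h / P ^ 2 / 2) := by field_simp
      _ ≤ 1 / h * (1 / √(1 + h / P ^ 2)) :=
        mul_le_mul_of_nonneg_left (one_sub_div_two_le_one_div_sqrt_one_add (by linarith)) hinv.le
  · exact mul_le_of_le_one_right hinv.le (one_div_sqrt_one_add_le_one hx)

theorem eventually_pos_near_horizon {M H c₁ : ℝ} (hM : 0 < M) (hc : c₁ > -8 * M ^ 3 * H) :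
    ∀ᶠ r in 𝓝 (2 * M), 0 < H * r + c₁ / r ^ 2 := by
  have hM2 : (2 * M) ^ 2 ≠ 0 := by positivity
  have hcont : ContinuousAt (fun r : ℝ => H * r + c₁ / r ^ 2) (2 * M) := by
    fun_prop (disch := positivity)
  have hpos : 0 < H * (2 * M) + c₁ / (2 * M) ^ 2 := by
    have : H * (2 * M) = 8 * M ^ 3 * H / (2 * M) ^ 2 := by field_simp; ring
    rw [this, ← add_div]
    exact div_pos (by linarith) (by positivity)
  exact hcont.eventually (lt_mem_nhds hpos)

/-- For `c₁ > -8M³H`, near the horizon one has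
`1/h(r) - 1/(2(Hr+c₁/r²)²) ≤ f₁'(r) ≤ 1/h(r)`. -/
theorem stmt_8 (M H c₁ : ℝ) (hM : 0 < M) (hc : c₁ > -8 * M ^ 3 * H) :
    ∃ δ > (0 : ℝ), ∀ r ∈ Set.Ioo (2 * M) (2 * M + δ),
      1 / (1 - 2 * M / r) - 1 / (2 * (H * r + c₁ / r ^ 2) ^ 2)
        ≤ ((1 / Real.sqrt (1 - 2 * M / r)) * (H * r + c₁ / r ^ 2)) / (1 - 2 * M / r) *
            Real.sqrt (1 / (1 + ((1 / Real.sqrt (1 - 2 * M / r)) * (H * r + c₁ / r ^ 2)) ^ 2)) ∧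
      ((1 / Real.sqrt (1 - 2 * M / r)) * (H * r + c₁ / r ^ 2)) / (1 - 2 * M / r) *
          Real.sqrt (1 / (1 + ((1 / Real.sqrt (1 - 2 * M / r)) * (H * r + c₁ / r ^ 2)) ^ 2))
        ≤ 1 / (1 - 2 * M / r) := by
  obtain ⟨u, hu, hsub⟩ := mem_nhdsGT_iff_exists_Ioo_subset.1
    (eventually_nhdsWithin_of_eventually_nhds (eventually_pos_near_horizon hM hc))
  refine ⟨u - 2 * M, sub_pos.2 hu, fun r hr => ?_⟩
  have hP : 0 < H * r + c₁ / r ^ 2 := hsub ⟨hr.1, by linarith [hr.2]⟩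
  have hh : 0 < 1 - 2 * M / r := sub_pos.2 ((div_lt_one (by linarith [hr.1])).2 hr.1)
  exact cmcSlope_mem_Icc hh hP
end

section
/- Let M>0 and H∈ℝ. The equation 3H·r^{3/2}(2M-r)^{1/2} = 2r - 3M has a unique solution r_H ∈ (0,2M), and r_H is the unique critical point of k_H(r) = -Hr³ - r^{3/2}(2M-r)^{1/2} on (0,2M); moreover k_H attains its minimum on (0,2M) at r_H. -/
/-!
Write `s(r) = r^{3/2}(2M-r)^{1/2}`. Since `s² = 2Mr³ - r⁴`, we get `s' = r²(3M - 2r)/s`, hence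
`k_H' = r² (ρ - 3H)` with `ρ = (2r - 3M)/s`, and `ρ' = (2s + r²(2r - 3M)²/s)/s² > 0`.
So the equation `3Hs = 2r - 3M`, i.e. `ρ = 3H`, has at most one root; one exists by the intermediate
value theorem, as `2r - 3M - 3Hs` goes from `-3M` at `r = 0` to `M` at `r = 2M`. The sign change of
`k_H'` at the root makes it the minimum.
-/

open Real Set

theorem isMinOn_of_deriv_neg_of_deriv_pos {f : ℝ → ℝ} {a b c : ℝ} (hf : ContinuousOn f (Ioo a b))
    (hc : c ∈ Ioo a b) (hneg : ∀ x ∈ Ioo a c, deriv f x < 0)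
    (hpos : ∀ x ∈ Ioo c b, 0 < deriv f x) : IsMinOn f (Ioo a b) c := by
  intro x hx
  show f c ≤ f x
  rcases lt_trichotomy x c with hxc | rfl | hcx
  · have hanti : StrictAntiOn f (Icc x c) :=
      strictAntiOn_of_deriv_neg (convex_Icc x c) (hf.mono (Icc_subset_Ioo hx.1 hc.2))
        (by rw [interior_Icc]; exact fun y hy => hneg y ⟨hx.1.trans hy.1, hy.2⟩)
    exact (hanti ⟨le_rfl, hxc.le⟩ ⟨hxc.le, le_rfl⟩ hxc).le
  · exact le_rfl
  · have hmono : StrictMonoOn f (Icc c x) :=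
      strictMonoOn_of_deriv_pos (convex_Icc c x) (hf.mono (Icc_subset_Ioo hc.1 hx.2))
        (by rw [interior_Icc]; exact fun y hy => hpos y ⟨hy.1, hy.2.trans hx.2⟩)
    exact (hmono ⟨le_rfl, hcx.le⟩ ⟨hcx.le, le_rfl⟩ hcx).le

namespace Schwarzschild

noncomputable def sqrtFactor (M r : ℝ) : ℝ := √(r ^ 3) * √(2 * M - r)

noncomputable def ratio (M r : ℝ) : ℝ := (2 * r - 3 * M) / sqrtFactor M r

variable {M r : ℝ}

@[fun_prop]
theorem continuous_sqrtFactor : Continuous (sqrtFactor M) :=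
  (continuous_sqrt.comp (continuous_pow 3)).mul (continuous_sqrt.comp (continuous_sub_left _))

theorem sqrtFactor_pos (hr : r ∈ Ioo 0 (2 * M)) : 0 < sqrtFactor M r :=
  mul_pos (sqrt_pos.2 (pow_pos hr.1 3)) (sqrt_pos.2 (sub_pos.2 hr.2))

theorem hasDerivAt_sqrtFactor (hr : r ∈ Ioo 0 (2 * M)) :
    HasDerivAt (sqrtFactor M) (r ^ 2 * (3 * M - 2 * r) / sqrtFactor M r) r := by
  have hr3 : 0 < r ^ 3 := pow_pos hr.1 3
  have hsub : 0 < 2 * M - r := sub_pos.2 hr.2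
  have hA := (hasDerivAt_pow 3 r).sqrt hr3.ne'
  have hB := ((hasDerivAt_id' r).const_sub (2 * M)).sqrt hsub.ne'
  refine (hA.mul hB).congr_deriv ?_
  unfold sqrtFactor
  push_cast
  field_simp
  linear_combination 3 * r ^ 2 * sq_sqrt hsub.le - sq_sqrt hr3.le

theorem hasDerivAt_ratio (hr : r ∈ Ioo 0 (2 * M)) :
    HasDerivAt (ratio M) ((2 * sqrtFactor M r + r ^ 2 * (2 * r - 3 * M) ^ 2 / sqrtFactor M r) /
      sqrtFactor M r ^ 2) r := by
  refine (((hasDerivAt_id' r).const_mul 2).sub_const (3 * M)).div (hasDerivAt_sqrtFactor hr)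
    (sqrtFactor_pos hr).ne' |>.congr_deriv ?_
  ring

theorem strictMonoOn_ratio : StrictMonoOn (ratio M) (Ioo 0 (2 * M)) := by
  refine strictMonoOn_of_deriv_pos (convex_Ioo 0 (2 * M)) (fun r hr => ?_) (fun r hr => ?_)
  · exact (hasDerivAt_ratio hr).continuousAt.continuousWithinAt
  · rw [interior_Ioo] at hr
    have hs := sqrtFactor_pos hr
    rw [(hasDerivAt_ratio hr).deriv]
    positivity

theorem hasDerivAt_cubic_sub_sqrtFactor (H : ℝ) (hr : r ∈ Ioo 0 (2 * M)) :
    HasDerivAt (fun r => -H * r ^ 3 - sqrtFactor M r) (r ^ 2 * (ratio M r - 3 * H)) r := by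
  refine ((hasDerivAt_pow 3 r).const_mul (-H)).sub (hasDerivAt_sqrtFactor hr) |>.congr_deriv ?_
  unfold ratio
  push_cast
  ring

theorem ratio_eq_iff (H : ℝ) (hr : r ∈ Ioo 0 (2 * M)) :
    ratio M r = 3 * H ↔ 3 * H * √(r ^ 3) * √(2 * M - r) = 2 * r - 3 * M := by
  rw [ratio, div_eq_iff (sqrtFactor_pos hr).ne', sqrtFactor, eq_comm, ← mul_assoc]

theorem exists_ratio_eq (H : ℝ) (hM : 0 < M) : ∃ r ∈ Ioo 0 (2 * M), ratio M r = 3 * H := by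
  have hcont : Continuous fun r => 2 * r - 3 * M - 3 * H * sqrtFactor M r := by fun_prop
  obtain ⟨r, hr, hroot⟩ := intermediate_value_Ioo (a := 0) (b := 2 * M) (by linarith)
    hcont.continuousOn (show (0 : ℝ) ∈ Ioo _ _ by norm_num [sqrtFactor]; constructor <;> linarith)
  refine ⟨r, hr, (ratio_eq_iff H hr).2 ?_⟩
  simp only [sqrtFactor] at hroot
  linear_combination -hroot

end Schwarzschild

open Schwarzschild in
/-- The equation `3H r^{3/2}(2M-r)^{1/2} = 2r - 3M` has a unique solution `r_H ∈ (0,2M)`,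
which is the unique critical point of `k_H(r) = -Hr³ - r^{3/2}(2M-r)^{1/2}` on `(0,2M)`,
and `k_H` attains its minimum on `(0,2M)` at `r_H`. -/
theorem stmt_13 (M H : ℝ) (hM : 0 < M) :
    ∃ rH ∈ Set.Ioo (0 : ℝ) (2 * M),
      3 * H * Real.sqrt (rH ^ 3) * Real.sqrt (2 * M - rH) = 2 * rH - 3 * M ∧
      (∀ r ∈ Set.Ioo (0 : ℝ) (2 * M),
        3 * H * Real.sqrt (r ^ 3) * Real.sqrt (2 * M - r) = 2 * r - 3 * M → r = rH) ∧
      (∀ r ∈ Set.Ioo (0 : ℝ) (2 * M),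
        deriv (fun r : ℝ => -H * r ^ 3 - Real.sqrt (r ^ 3) * Real.sqrt (2 * M - r)) r = 0
          ↔ r = rH) ∧
      (∀ r ∈ Set.Ioo (0 : ℝ) (2 * M),
        -H * rH ^ 3 - Real.sqrt (rH ^ 3) * Real.sqrt (2 * M - rH)
          ≤ -H * r ^ 3 - Real.sqrt (r ^ 3) * Real.sqrt (2 * M - r)) := by
  obtain ⟨rH, hrH, hratio⟩ := exists_ratio_eq H hM
  have hinj := (strictMonoOn_ratio (M := M)).injOn
  have hderiv (r) (hr : r ∈ Ioo 0 (2 * M)) :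
      deriv (fun r => -H * r ^ 3 - sqrtFactor M r) r = r ^ 2 * (ratio M r - ratio M rH) := by
    rw [(hasDerivAt_cubic_sub_sqrtFactor H hr).deriv, hratio]
  refine ⟨rH, hrH, (ratio_eq_iff H hrH).1 hratio, fun r hr h => ?_, fun r hr => ?_, ?_⟩
  · exact hinj hr hrH (((ratio_eq_iff H hr).2 h).trans hratio.symm)
  · change deriv (fun r => -H * r ^ 3 - sqrtFactor M r) r = 0 ↔ _
    rw [hderiv r hr, mul_eq_zero, sub_eq_zero, or_iff_right (pow_ne_zero 2 hr.1.ne')]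
    exact hinj.eq_iff hr hrH
  · refine isMinOn_of_deriv_neg_of_deriv_pos (f := fun r => -H * r ^ 3 - sqrtFactor M r)
      (by fun_prop) hrH
      (fun x hx => ?_) (fun x hx => ?_)
    · have hx' : x ∈ Ioo 0 (2 * M) := ⟨hx.1, hx.2.trans hrH.2⟩
      rw [hderiv x hx']
      exact mul_neg_of_pos_of_neg (pow_pos hx.1 2)
        (sub_neg.2 (strictMonoOn_ratio hx' hrH hx.2))
    · have hx' : x ∈ Ioo 0 (2 * M) := ⟨hrH.1.trans hx.1, hx.2⟩
      rw [hderiv x hx']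
      exact mul_pos (pow_pos hx'.1 2) (sub_pos.2 (strictMonoOn_ratio hrH hx' hx.1))
end

section
/- Let M>0 and H∈ℝ. Define k_H(r) = -Hr³ - r^{3/2}(2M-r)^{1/2} on (0,2M) and c_H = min_{(0,2M)} k_H. Then c_H < -8M³H. -/
/-!
Near the horizon, with `t = 2M - r`, the cubic term differs from `-8M³H` by `O(t)`, while the
square-root term contributes `-r^{3/2} √t`; since `√t ≫ t` as `t → 0⁺`, `k_H` dips strictly
below its boundary value `-8M³H` just inside `r = 2M`.
-/

open Real Set

noncomputable def kH (M H r : ℝ) : ℝ := -H * r ^ 3 - √(r ^ 3) * √(2 * M - r)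

lemma kH_add_le {M H r : ℝ} (hM : 0 ≤ M) (hMr : M ≤ r) (hr : r ≤ 2 * M) :
    kH M H r + 8 * M ^ 3 * H ≤ 12 * M ^ 2 * |H| * (2 * M - r) - √(M ^ 3) * √(2 * M - r) := by
  have hcube : 8 * M ^ 3 - r ^ 3 = (2 * M - r) * (4 * M ^ 2 + 2 * M * r + r ^ 2) := by ring
  have hcube_le : 8 * M ^ 3 - r ^ 3 ≤ 12 * M ^ 2 * (2 * M - r) := by
    rw [hcube, mul_comm (12 * M ^ 2)]
    exact mul_le_mul_of_nonneg_left (by nlinarith) (by linarith)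
  have hcube_nonneg : 0 ≤ 8 * M ^ 3 - r ^ 3 := by
    rw [hcube]; exact mul_nonneg (by linarith) (by nlinarith)
  have hcubic : H * (8 * M ^ 3 - r ^ 3) ≤ 12 * M ^ 2 * |H| * (2 * M - r) :=
    calc H * (8 * M ^ 3 - r ^ 3) ≤ |H| * (8 * M ^ 3 - r ^ 3) :=
          mul_le_mul_of_nonneg_right (le_abs_self H) hcube_nonneg
      _ ≤ |H| * (12 * M ^ 2 * (2 * M - r)) := mul_le_mul_of_nonneg_left hcube_le (abs_nonneg H)
      _ = 12 * M ^ 2 * |H| * (2 * M - r) := by ring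
  have hroot : √(M ^ 3) * √(2 * M - r) ≤ √(r ^ 3) * √(2 * M - r) :=
    mul_le_mul_of_nonneg_right (sqrt_le_sqrt (pow_le_pow_left₀ hM hMr 3)) (sqrt_nonneg _)
  unfold kH
  linarith

lemma exists_kH_lt (M H : ℝ) (hM : 0 < M) :
    ∃ r ∈ Ioo 0 (2 * M), kH M H r < -8 * M ^ 3 * H := by
  set a := √M
  have ha : 0 < a := sqrt_pos.mpr hM
  have haM : a ^ 2 = M := sq_sqrt hM.le
  have hden : 1 ≤ 1 + 12 * a ^ 2 * |H| := le_add_of_nonneg_right (by positivity)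
  -- `s = √(2M - r)`; it is chosen so that the linear term `12M²|H|s²` loses to `M^{3/2} s`
  set s := a / (1 + 12 * a ^ 2 * |H|)
  have hs : 0 < s := by positivity
  have hsa : s ≤ a := div_le_self ha.le hden
  have hlin : 12 * M ^ 2 * |H| * s < a ^ 3 := by
    rw [← haM, mul_div_assoc', div_lt_iff₀ (by positivity)]
    nlinarith [pow_pos ha 3]
  have hs2 : s ^ 2 ≤ M := haM ▸ pow_le_pow_left₀ hs.le hsa 2
  have hroot : √(2 * M - (2 * M - s ^ 2)) = s := by rw [sub_sub_cancel, sqrt_sq hs.le]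
  have hM3 : √(M ^ 3) = a ^ 3 := by
    rw [← haM, ← pow_mul, show 2 * 3 = 3 * 2 by rfl, pow_mul, sqrt_sq (by positivity)]
  refine ⟨2 * M - s ^ 2, ⟨by linarith, by nlinarith⟩, ?_⟩
  have hbound := kH_add_le (H := H) hM.le (show M ≤ 2 * M - s ^ 2 by linarith)
    (show 2 * M - s ^ 2 ≤ 2 * M by nlinarith)
  rw [hroot, hM3, sub_sub_cancel] at hbound
  nlinarith [mul_lt_mul_of_pos_right hlin hs]

/-- The minimum `c_H` of `k_H(r) = -Hr³ - r^{3/2}(2M-r)^{1/2}` on `(0,2M)` satisfies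
`c_H < -8M³H`. -/
theorem stmt_14 (M H : ℝ) (hM : 0 < M) :
    sInf ((fun r : ℝ => -H * r ^ 3 - Real.sqrt (r ^ 3) * Real.sqrt (2 * M - r)) ''
        Set.Ioo (0 : ℝ) (2 * M))
      < -8 * M ^ 3 * H := by
  change sInf (kH M H '' Ioo 0 (2 * M)) < _
  have hcont : ContinuousOn (kH M H) (Icc 0 (2 * M)) := by unfold kH; fun_prop
  have hbdd : BddBelow (kH M H '' Ioo 0 (2 * M)) :=
    (isCompact_Icc.bddBelow_image hcont).mono (image_mono Ioo_subset_Icc_self)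
  obtain ⟨r, hr, hlt⟩ := exists_kH_lt M H hM
  exact (csInf_le hbdd (mem_image_of_mem _ hr)).trans_lt hlt
end

section
/- Let M>0 and H∈ℝ. Define k̃_H(r) = -Hr³ + r^{3/2}(2M-r)^{1/2} on (0,2M). Then k̃_H has a unique critical point R_H ∈ (0,2M), determined by -3H·R_H^{3/2}(2M-R_H)^{1/2} = 2R_H - 3M, and k̃_H attains its maximum on (0,2M) at R_H; moreover C_H := k̃_H(R_H) > -8M³H. -/
/-!
Writing `V(r) = √(r³)√(2M - r)` and `φ(r) = (2r - 3M) / V(r)`, one has `V' = -r²φ`, so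
`k̃_H'(r) = r² (-3H - φ(r))`. Since `φ' = (2V + r²(2r - 3M)²/V) / V² > 0`, `φ` is strictly
increasing on `(0, 2M)`, and the intermediate value theorem applied to `-3HV(r) - (2r - 3M)`
(which is `3M` at `0` and `-M` at `2M`) gives the unique `R_H` with `φ(R_H) = -3H`. Hence `k̃_H`
increases on `(0, R_H]` and decreases on `[R_H, 2M]`, where it ends at `k̃_H(2M) = -8M³H`.
-/

open Real Set

noncomputable def kTilde (M H r : ℝ) : ℝ := -H * r ^ 3 + √(r ^ 3) * √(2 * M - r)

noncomputable def critRatio (M r : ℝ) : ℝ := (2 * r - 3 * M) / (√(r ^ 3) * √(2 * M - r))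

lemma sqrt_pow_three {r : ℝ} (hr : 0 ≤ r) : √(r ^ 3) = r * √r := by
  rw [show r ^ 3 = r ^ 2 * r by ring, sqrt_mul (by positivity), sqrt_sq hr]

lemma continuous_kTilde (M H : ℝ) : Continuous (kTilde M H) := by
  unfold kTilde
  fun_prop

section

variable {M r : ℝ}

lemma sqrt_pow_three_mul_sqrt_pos (hr : 0 < r) (hr₂ : r < 2 * M) :
    0 < √(r ^ 3) * √(2 * M - r) :=
  mul_pos (sqrt_pos.2 (by positivity)) (sqrt_pos.2 (by linarith))

lemma hasDerivAt_sqrt_pow_three_mul_sqrt (hr : 0 < r) (hr₂ : r < 2 * M) :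
    HasDerivAt (fun x ↦ √(x ^ 3) * √(2 * M - x)) (-(r ^ 2 * critRatio M r)) r := by
  have hcube : HasDerivAt (fun x : ℝ ↦ x ^ 3) (3 * r ^ 2) r := by
    simpa using hasDerivAt_pow 3 r
  have hlin : HasDerivAt (fun x : ℝ ↦ 2 * M - x) (-1) r := by
    simpa using (hasDerivAt_id r).const_sub (2 * M)
  refine ((hcube.sqrt (by positivity)).mul (hlin.sqrt (by linarith))).congr_deriv ?_
  have hb : 0 < √(2 * M - r) := sqrt_pos.2 (by linarith)
  have ha₂ : √r ^ 2 = r := sq_sqrt hr.le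
  have hb₂ : √(2 * M - r) ^ 2 = 2 * M - r := sq_sqrt (by linarith)
  rw [critRatio, sqrt_pow_three hr.le]
  field_simp
  linear_combination 3 * hb₂ - ha₂

lemma hasDerivAt_kTilde (H : ℝ) (hr : 0 < r) (hr₂ : r < 2 * M) :
    HasDerivAt (kTilde M H) (r ^ 2 * (-3 * H - critRatio M r)) r := by
  have hcube : HasDerivAt (fun x : ℝ ↦ -H * x ^ 3) (-H * (3 * r ^ 2)) r := by
    simpa using (hasDerivAt_pow 3 r).const_mul (-H)
  exact (hcube.add (hasDerivAt_sqrt_pow_three_mul_sqrt hr hr₂)).congr_deriv (by ring)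

lemma hasDerivAt_critRatio (hr : 0 < r) (hr₂ : r < 2 * M) :
    ∃ d, HasDerivAt (critRatio M) d r ∧ 0 < d := by
  have hV := sqrt_pow_three_mul_sqrt_pos hr hr₂
  have hu : HasDerivAt (fun x : ℝ ↦ 2 * x - 3 * M) 2 r := by
    simpa using ((hasDerivAt_id r).const_mul 2).sub_const (3 * M)
  refine ⟨_, hu.div (hasDerivAt_sqrt_pow_three_mul_sqrt hr hr₂) hV.ne',
    div_pos ?_ (by positivity)⟩
  set V := √(r ^ 3) * √(2 * M - r)
  have hnum : 2 * V - (2 * r - 3 * M) * -(r ^ 2 * critRatio M r)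
      = 2 * V + r ^ 2 * (2 * r - 3 * M) ^ 2 / V := by
    rw [critRatio]; ring
  rw [hnum]
  positivity

end

section

variable {M H R : ℝ}

lemma critRatio_strictMonoOn : StrictMonoOn (critRatio M) (Ioo 0 (2 * M)) := by
  apply strictMonoOn_of_deriv_pos (convex_Ioo _ _)
  · intro r hr
    obtain ⟨d, hd, -⟩ := hasDerivAt_critRatio hr.1 hr.2
    exact hd.continuousAt.continuousWithinAt
  · intro r hr
    rw [interior_Ioo] at hr
    obtain ⟨d, hd, hd_pos⟩ := hasDerivAt_critRatio hr.1 hr.2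
    rwa [hd.deriv]

lemma exists_critical_eq (hM : 0 < M) (H : ℝ) :
    ∃ R ∈ Ioo 0 (2 * M), -3 * H * √(R ^ 3) * √(2 * M - R) = 2 * R - 3 * M := by
  let g : ℝ → ℝ := fun x ↦ -3 * H * √(x ^ 3) * √(2 * M - x) - (2 * x - 3 * M)
  have hg : ContinuousOn g (Icc 0 (2 * M)) := by fun_prop
  have h0 : (0 : ℝ) ∈ Ioo (g (2 * M)) (g 0) := by
    simp only [g, sub_self, sqrt_zero, mul_zero]
    constructor <;> norm_num <;> linarith
  obtain ⟨R, hR, hgR⟩ := intermediate_value_Ioo' (by linarith) hg h0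
  exact ⟨R, hR, sub_eq_zero.mp hgR⟩

lemma critRatio_eq_of_critical_eq (hR : R ∈ Ioo 0 (2 * M))
    (hcrit : -3 * H * √(R ^ 3) * √(2 * M - R) = 2 * R - 3 * M) : critRatio M R = -3 * H := by
  rw [critRatio, div_eq_iff (sqrt_pow_three_mul_sqrt_pos hR.1 hR.2).ne', ← hcrit]
  ring

lemma deriv_kTilde_eq (hφ : critRatio M R = -3 * H) {x : ℝ} (hx : x ∈ Ioo 0 (2 * M)) :
    deriv (kTilde M H) x = x ^ 2 * (critRatio M R - critRatio M x) := by
  rw [(hasDerivAt_kTilde H hx.1 hx.2).deriv, hφ]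

lemma deriv_kTilde_eq_zero_iff (hR : R ∈ Ioo 0 (2 * M)) (hφ : critRatio M R = -3 * H) {r : ℝ}
    (hr : r ∈ Ioo 0 (2 * M)) :
    deriv (kTilde M H) r = 0 ↔ r = R := by
  rw [deriv_kTilde_eq hφ hr, mul_eq_zero, sub_eq_zero, eq_comm (a := critRatio M R),
    critRatio_strictMonoOn.injOn.eq_iff hr hR]
  simp [hr.1.ne']

lemma kTilde_strictMonoOn (hR : R ∈ Ioo 0 (2 * M)) (hφ : critRatio M R = -3 * H) :
    StrictMonoOn (kTilde M H) (Ioc 0 R) := by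
  apply strictMonoOn_of_deriv_pos (convex_Ioc _ _)
  · exact (continuous_kTilde M H).continuousOn
  · intro x hx
    rw [interior_Ioc] at hx
    have hx' : x ∈ Ioo 0 (2 * M) := ⟨hx.1, hx.2.trans hR.2⟩
    rw [deriv_kTilde_eq hφ hx']
    exact mul_pos (pow_pos hx.1 2) (sub_pos.2 (critRatio_strictMonoOn hx' hR hx.2))

lemma kTilde_strictAntiOn (hR : R ∈ Ioo 0 (2 * M)) (hφ : critRatio M R = -3 * H) :
    StrictAntiOn (kTilde M H) (Icc R (2 * M)) := by
  apply strictAntiOn_of_deriv_neg (convex_Icc _ _)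
  · exact (continuous_kTilde M H).continuousOn
  · intro x hx
    rw [interior_Icc] at hx
    have hx' : x ∈ Ioo 0 (2 * M) := ⟨hR.1.trans hx.1, hx.2⟩
    rw [deriv_kTilde_eq hφ hx']
    exact mul_neg_of_pos_of_neg (pow_pos hx'.1 2)
      (sub_neg.2 (critRatio_strictMonoOn hR hx' hx.1))

lemma isMaxOn_kTilde (hR : R ∈ Ioo 0 (2 * M)) (hφ : critRatio M R = -3 * H) :
    IsMaxOn (kTilde M H) (Ioo 0 (2 * M)) R := by
  intro r hr
  rcases le_total r R with hrR | hRr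
  · exact (kTilde_strictMonoOn hR hφ).monotoneOn ⟨hr.1, hrR⟩ ⟨hR.1, le_rfl⟩ hrR
  · exact (kTilde_strictAntiOn hR hφ).antitoneOn ⟨le_rfl, hR.2.le⟩ ⟨hRr, hr.2.le⟩ hRr

end

lemma kTilde_two_mul (M H : ℝ) : kTilde M H (2 * M) = -8 * M ^ 3 * H := by
  simp only [kTilde, sub_self, sqrt_zero, mul_zero, add_zero]
  ring

/-- `k̃_H(r) = -Hr³ + r^{3/2}(2M-r)^{1/2}` has a unique critical point `R_H ∈ (0,2M)`,
determined by `-3H R_H^{3/2}(2M-R_H)^{1/2} = 2R_H - 3M`, where `k̃_H` attains its maximum on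
`(0,2M)`; moreover `C_H = k̃_H(R_H) > -8M³H`. -/
theorem stmt_17 (M H : ℝ) (hM : 0 < M) :
    ∃ RH ∈ Set.Ioo (0 : ℝ) (2 * M),
      -3 * H * Real.sqrt (RH ^ 3) * Real.sqrt (2 * M - RH) = 2 * RH - 3 * M ∧
      (∀ r ∈ Set.Ioo (0 : ℝ) (2 * M),
        deriv (fun r : ℝ => -H * r ^ 3 + Real.sqrt (r ^ 3) * Real.sqrt (2 * M - r)) r = 0
          ↔ r = RH) ∧
      (∀ r ∈ Set.Ioo (0 : ℝ) (2 * M),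
        -H * r ^ 3 + Real.sqrt (r ^ 3) * Real.sqrt (2 * M - r)
          ≤ -H * RH ^ 3 + Real.sqrt (RH ^ 3) * Real.sqrt (2 * M - RH)) ∧
      -8 * M ^ 3 * H < -H * RH ^ 3 + Real.sqrt (RH ^ 3) * Real.sqrt (2 * M - RH) := by
  obtain ⟨R, hR, hcrit⟩ := exists_critical_eq hM H
  have hφ := critRatio_eq_of_critical_eq hR hcrit
  have hC : kTilde M H (2 * M) < kTilde M H R :=
    kTilde_strictAntiOn hR hφ ⟨le_rfl, hR.2.le⟩ ⟨hR.2.le, le_rfl⟩ hR.2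
  rw [kTilde_two_mul] at hC
  exact ⟨R, hR, hcrit, fun r hr ↦ deriv_kTilde_eq_zero_iff hR hφ hr,
    isMaxOn_kTilde hR hφ, hC⟩
end

section
/- Let M>0, H∈ℝ, c₁ < -8M³H, and c₂ < -8M³H. Suppose lim_{r→2M⁺} ( f₁'(r) + 1/h(r) ) = lim_{r→2M⁻} ( f₂'(r) + 1/h(r) ), where h(r)=1-2M/r, f₁'(r) = (l₁/h)√(1/(1+l₁²)) with l₁(r)=(1/√h)(Hr+c₁/r²) for r>2M, and f₂'(r) = (1/(-h))√(l₂²/(l₂²-1)) with l₂(r)=(1/√(-h))(-Hr-c₂/r²) for r<2M. Given that these limits equal 1/(2(2MH + c₁/(4M²))²) and 1/(2(-2MH - c₂/(4M²))²) respectively, conclude c₂ = c₁. -/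
open Real

/-! Writing `a = 2MH + c₁/(4M²)` and `b = -2MH - c₂/(4M²)`, the bounds on `c₁, c₂` say exactly
`a < 0 < b`, while the matching condition says `a² = b²`. Of the two roots `b = ±a` only
`b = -a`, i.e. `c₂ = c₁`, is compatible with the signs; `b = a` is the root `c₂ = -c₁ - 16M³H`. -/

lemma eq_neg_of_sq_eq_sq_of_neg_of_pos {a b : ℝ} (ha : a < 0) (hb : 0 < b) (h : a ^ 2 = b ^ 2) :
    b = -a := by
  rw [sq_eq_sq_iff_abs_eq_abs, abs_of_neg ha, abs_of_pos hb] at h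
  exact h.symm

lemma sq_eq_sq_of_one_div_two_mul_sq_eq {a b : ℝ} (h : 1 / (2 * a ^ 2) = 1 / (2 * b ^ 2)) :
    a ^ 2 = b ^ 2 := by
  simpa only [one_div, inv_inj, mul_eq_mul_left_iff, two_ne_zero, or_false] using h

lemma add_div_neg_of_lt_neg_mul {M H c : ℝ} (hM : 0 < M) (hc : c < -8 * M ^ 3 * H) :
    2 * M * H + c / (4 * M ^ 2) < 0 := by
  have hM2 : 0 < 4 * M ^ 2 := by positivity
  have : c / (4 * M ^ 2) < -(2 * M * H) := by
    rw [div_lt_iff₀ hM2]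
    linarith
  linarith

/-- Matching condition across the horizon: if `c₁ < -8M³H`, `c₂ < -8M³H` and the finite parts
of the slopes agree, i.e. `1/(2(2MH + c₁/(4M²))²) = 1/(2(-2MH - c₂/(4M²))²)`, then `c₂ = c₁`. -/
theorem stmt_18 (M H c₁ c₂ : ℝ) (hM : 0 < M)
    (hc₁ : c₁ < -8 * M ^ 3 * H) (hc₂ : c₂ < -8 * M ^ 3 * H)
    (heq : 1 / (2 * (2 * M * H + c₁ / (4 * M ^ 2)) ^ 2)
      = 1 / (2 * (-2 * M * H - c₂ / (4 * M ^ 2)) ^ 2)) :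
    c₂ = c₁ := by
  have ha := add_div_neg_of_lt_neg_mul hM hc₁
  have hb : 0 < -2 * M * H - c₂ / (4 * M ^ 2) := by
    linarith [add_div_neg_of_lt_neg_mul hM hc₂]
  have hab := eq_neg_of_sq_eq_sq_of_neg_of_pos ha hb (sq_eq_sq_of_one_div_two_mul_sq_eq heq)
  have hdiv : c₂ / (4 * M ^ 2) = c₁ / (4 * M ^ 2) := by linarith
  exact (div_left_inj' (by positivity)).mp hdiv
end

section
/- Let M>0, H∈ℝ, c₁∈ℝ. Define f̄'(r) = r⁴ / ( (Hr³+c₁)² + r³(r-2M) - (Hr³+c₁)·√((Hr³+c₁)² + r³(r-2M)) ). If c₁ < -8M³H, then for r in a neighborhood of 2M with r>2M one has f̄'(r) = f₁'(r) + 1/h(r), where h(r)=1-2M/r and f₁'(r)=(l₁/h)√(1/(1+l₁²)), l₁(r)=(1/√h)(Hr+c₁/r²); in particular f̄' extends continuously to r=2M with value f̄'(2M) = 1/(2(2MH + c₁/(4M²))²). -/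
/-!
Write `A = H r³ + c₁` and `s = √(A² + r³(r - 2M))`. The denominator of `f̄'` factors as
`s (s - A)`, and multiplying by the conjugate `s + A` gives `f̄' = (1 + A/s)/h`; on the other
hand `l₁/√(1 + l₁²) = A/s`, which is the claimed splitting. At `r = 2M` the hypothesis
`c₁ < -8M³H` says `A < 0`, so the denominator `A² - A|A| = 2A²` does not vanish and `f̄'` is
continuous there.
-/

open Real Set Filter Topology

noncomputable def regularSlope (M H c₁ r : ℝ) : ℝ :=
  r ^ 4 / ((H * r ^ 3 + c₁) ^ 2 + r ^ 3 * (r - 2 * M) -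
    (H * r ^ 3 + c₁) * √((H * r ^ 3 + c₁) ^ 2 + r ^ 3 * (r - 2 * M)))

lemma div_mul_sqrt_one_div_one_add_sq (a : ℝ) {b : ℝ} (hb : 0 < b) :
    a / b * √(1 / (1 + (a / b) ^ 2)) = a / √(a ^ 2 + b ^ 2) := by
  have hfrac : 1 + (a / b) ^ 2 = (a ^ 2 + b ^ 2) / b ^ 2 := by field_simp; ring
  have hs : 0 < √(a ^ 2 + b ^ 2) := Real.sqrt_pos.mpr (by positivity)
  rw [hfrac, one_div_div, Real.sqrt_div' _ (by positivity), Real.sqrt_sq hb.le]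
  field_simp

lemma one_div_sq_add_sub_mul_sqrt (A : ℝ) {k : ℝ} (hk : 0 < k) :
    1 / (A ^ 2 + k - A * √(A ^ 2 + k)) = (1 + A / √(A ^ 2 + k)) / k := by
  set s := √(A ^ 2 + k)
  have hs2 : s ^ 2 = A ^ 2 + k := Real.sq_sqrt (by positivity)
  have hs : 0 < s := Real.sqrt_pos.mpr (by positivity)
  have hAs : A < s := by
    have : |A| < s := by
      rw [← Real.sqrt_sq_eq_abs]
      exact Real.sqrt_lt_sqrt (sq_nonneg A) (by linarith)
    exact (le_abs_self A).trans_lt this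
  have hsA : s - A ≠ 0 := sub_ne_zero.mpr hAs.ne'
  have hk' : k = (s - A) * (s + A) := by linear_combination -hs2
  rw [← hs2, show s ^ 2 - A * s = s * (s - A) by ring, eq_div_iff hk.ne', hk']
  field_simp

lemma regularSlope_eq (M H c₁ : ℝ) {r : ℝ} (hr₀ : 0 < r) (hr : 2 * M < r) :
    regularSlope M H c₁ r
      = ((1 / √(1 - 2 * M / r)) * (H * r + c₁ / r ^ 2)) / (1 - 2 * M / r) *
          √(1 / (1 + ((1 / √(1 - 2 * M / r)) * (H * r + c₁ / r ^ 2)) ^ 2))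
        + 1 / (1 - 2 * M / r) := by
  have hh : 1 - 2 * M / r = (r - 2 * M) / r := by field_simp
  have hh₀ : 0 < 1 - 2 * M / r := by rw [hh]; exact div_pos (by linarith) hr₀
  have hk : r ^ 3 * (r - 2 * M) = (√(1 - 2 * M / r) * r ^ 2) ^ 2 := by
    rw [mul_pow, Real.sq_sqrt hh₀.le, hh]; field_simp
  have hl : 1 / √(1 - 2 * M / r) * (H * r + c₁ / r ^ 2)
      = (H * r ^ 3 + c₁) / (√(1 - 2 * M / r) * r ^ 2) := by
    field_simp
  have hk₀ : 0 < r ^ 3 * (r - 2 * M) := mul_pos (by positivity) (by linarith)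
  rw [regularSlope, hl, div_mul_eq_mul_div,
    div_mul_sqrt_one_div_one_add_sq _ (by positivity), ← hk, div_eq_mul_one_div (r ^ 4),
    one_div_sq_add_sub_mul_sqrt _ hk₀, hh]
  field_simp
  ring

lemma regularSlope_horizon (M H c₁ : ℝ) (hM : 0 < M) (hc : c₁ < -8 * M ^ 3 * H) :
    regularSlope M H c₁ (2 * M) = 1 / (2 * (2 * M * H + c₁ / (4 * M ^ 2)) ^ 2) := by
  have hA : H * (2 * M) ^ 3 + c₁ < 0 := by nlinarith
  have hAM : 2 * M * H + c₁ / (4 * M ^ 2) = (H * (2 * M) ^ 3 + c₁) / (4 * M ^ 2) := by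
    field_simp; ring
  rw [regularSlope, sub_self, mul_zero, add_zero, Real.sqrt_sq_eq_abs, abs_of_neg hA, hAM]
  field_simp
  ring

lemma continuousAt_regularSlope_horizon (M H c₁ : ℝ) (hc : c₁ < -8 * M ^ 3 * H) :
    ContinuousAt (regularSlope M H c₁) (2 * M) := by
  have hA : H * (2 * M) ^ 3 + c₁ < 0 := by nlinarith
  refine ContinuousAt.div (by fun_prop) (by fun_prop) ?_
  rw [sub_self, mul_zero, add_zero, Real.sqrt_sq_eq_abs, abs_of_neg hA]
  nlinarith

/-- For `c₁ < -8M³H`, the regular part `f̄'(r)` agrees with `f₁'(r) + 1/h(r)` near `r = 2M⁺`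
and extends continuously to `r = 2M` with value `1/(2(2MH + c₁/(4M²))²)`. -/
theorem stmt_19 (M H c₁ : ℝ) (hM : 0 < M) (hc : c₁ < -8 * M ^ 3 * H) :
    (∃ δ > (0 : ℝ), ∀ r ∈ Set.Ioo (2 * M) (2 * M + δ),
      r ^ 4 / ((H * r ^ 3 + c₁) ^ 2 + r ^ 3 * (r - 2 * M) -
          (H * r ^ 3 + c₁) * Real.sqrt ((H * r ^ 3 + c₁) ^ 2 + r ^ 3 * (r - 2 * M)))
        = ((1 / Real.sqrt (1 - 2 * M / r)) * (H * r + c₁ / r ^ 2)) / (1 - 2 * M / r) *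
            Real.sqrt (1 / (1 + ((1 / Real.sqrt (1 - 2 * M / r)) * (H * r + c₁ / r ^ 2)) ^ 2))
          + 1 / (1 - 2 * M / r)) ∧
    Filter.Tendsto
      (fun r : ℝ => r ^ 4 / ((H * r ^ 3 + c₁) ^ 2 + r ^ 3 * (r - 2 * M) -
        (H * r ^ 3 + c₁) * Real.sqrt ((H * r ^ 3 + c₁) ^ 2 + r ^ 3 * (r - 2 * M))))
      (nhdsWithin (2 * M) (Set.Ioi (2 * M)))
      (nhds (1 / (2 * (2 * M * H + c₁ / (4 * M ^ 2)) ^ 2))) ∧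
    (2 * M) ^ 4 / ((H * (2 * M) ^ 3 + c₁) ^ 2 + (2 * M) ^ 3 * (2 * M - 2 * M) -
        (H * (2 * M) ^ 3 + c₁) *
          Real.sqrt ((H * (2 * M) ^ 3 + c₁) ^ 2 + (2 * M) ^ 3 * (2 * M - 2 * M)))
      = 1 / (2 * (2 * M * H + c₁ / (4 * M ^ 2)) ^ 2) := by
  have hlim : Tendsto (regularSlope M H c₁) (𝓝[>] (2 * M))
      (𝓝 (1 / (2 * (2 * M * H + c₁ / (4 * M ^ 2)) ^ 2))) := by
    rw [← regularSlope_horizon M H c₁ hM hc]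
    exact (continuousAt_regularSlope_horizon M H c₁ hc).tendsto.mono_left nhdsWithin_le_nhds
  refine ⟨⟨M, hM, fun r hr => ?_⟩, hlim, regularSlope_horizon M H c₁ hM hc⟩
  exact regularSlope_eq M H c₁ (by linarith [hr.1]) hr.1
end
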